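/- For any three subspaces U1, U2, U3 of a finite-dimensional vector space V over a field F, dim(U1 ∩ U2 ∩ U3) = dim U1 + dim U2 + dim U3 − rank(M), where M is the block matrix [[A1, A2, 0],[A1, 0, A3]] formed from matrices A_i whose columns are bases of U_i: specifically, if A_i ∈ F^{d×μ_i} has column span U_i, then dim(U1 ∩ U2 ∩ U3) = μ1 + μ2 + μ3 − rank([[A1, A2, 0],[A1, 0, A3]]). -/

import Mathlib

/-!
A vector `(x, y, z)` lies in the kernel of `M = [[A₁, A₂, 0], [A₁, 0, A₃]]` exactly when
`A₁ x = A₂ (-y) = A₃ (-z)`, and this common vector then lies in `U₁ ∩ U₂ ∩ U₃`. So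
`(x, y, z) ↦ A₁ x` maps `ker M` onto the intersection; it is injective on `ker M` because each
`A_i` has independent columns, and rank–nullity for `M` gives the formula.
-/

open Matrix

/-- The `F`-linear span of the columns of a matrix. -/
noncomputable def colSpan {F : Type*} [Field F] {m n : Type*} [Fintype m] [Fintype n]
    (M : Matrix m n F) : Submodule F (m → F) :=
  Submodule.span F (Set.range M.transpose)

lemma Submodule.finrank_map_of_injOn {R M N : Type*} [Ring R] [AddCommGroup M] [AddCommGroup N]
    [Module R M] [Module R N] {f : M →ₗ[R] N} {p : Submodule R M} (hf : Set.InjOn f p) :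
    Module.finrank R (p.map f) = Module.finrank R p :=
  (LinearEquiv.ofBijective (f.submoduleMap p)
    ⟨LinearMap.submoduleMap_injective_of_injOn hf, f.submoduleMap_surjective p⟩).finrank_eq.symm

section

variable {F : Type*} [Field F] {m n : Type*} [Fintype m] [Fintype n]

lemma colSpan_eq_range_mulVecLin (A : Matrix m n F) :
    colSpan A = LinearMap.range A.mulVecLin :=
  (Matrix.range_mulVecLin A).symm

lemma mem_colSpan_iff (A : Matrix m n F) (w : m → F) :
    w ∈ colSpan A ↔ ∃ c, A *ᵥ c = w := by
  rw [colSpan_eq_range_mulVecLin]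
  rfl

end

section

variable {F : Type*} [Field F] {m n₁ n₂ n₃ : Type*} [Fintype n₁]
variable (A₁ : Matrix m n₁ F) (A₂ : Matrix m n₂ F) (A₃ : Matrix m n₃ F)

/-- A kernel vector `(x, y, z)` of the block matrix is sent to the common vector
`A₁ x = A₂ (-y) = A₃ (-z)`. -/
def kerToIntersection : ((n₁ ⊕ n₂) ⊕ n₃ → F) →ₗ[F] m → F :=
  A₁.mulVecLin ∘ₗ LinearMap.funLeft F F (Sum.inl ∘ Sum.inl)

lemma kerToIntersection_apply (v : (n₁ ⊕ n₂) ⊕ n₃ → F) :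
    kerToIntersection A₁ v = A₁ *ᵥ (v ∘ Sum.inl ∘ Sum.inl) :=
  rfl

variable [Fintype n₂] [Fintype n₃]

lemma fromBlocks_fromCols_mulVec_eq_zero_iff (v : (n₁ ⊕ n₂) ⊕ n₃ → F) :
    fromBlocks (fromCols A₁ A₂) 0 (fromCols A₁ 0) A₃ *ᵥ v = 0 ↔
      A₂ *ᵥ -(v ∘ Sum.inl ∘ Sum.inr) = A₁ *ᵥ (v ∘ Sum.inl ∘ Sum.inl) ∧
        A₃ *ᵥ -(v ∘ Sum.inr) = A₁ *ᵥ (v ∘ Sum.inl ∘ Sum.inl) := by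
  simp only [fromBlocks_mulVec, fromCols_mulVec, zero_mulVec, add_zero, ← Sum.elim_zero_zero,
    Sum.elim_eq_iff, mulVec_neg, neg_eq_iff_eq_neg, add_eq_zero_iff_eq_neg', Function.comp_assoc]

variable {A₁ A₂ A₃} in
lemma disjoint_ker_fromBlocks_fromCols_ker_kerToIntersection (h₁ : LinearIndependent F A₁ᵀ)
    (h₂ : LinearIndependent F A₂ᵀ) (h₃ : LinearIndependent F A₃ᵀ) :
    Disjoint (LinearMap.ker (fromBlocks (fromCols A₁ A₂) 0 (fromCols A₁ 0) A₃).mulVecLin)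
      (LinearMap.ker (kerToIntersection A₁)) := by
  refine Submodule.disjoint_def.mpr fun v hv hv₁ ↦ ?_
  rw [LinearMap.mem_ker, mulVecLin_apply, fromBlocks_fromCols_mulVec_eq_zero_iff] at hv
  rw [LinearMap.mem_ker, kerToIntersection_apply] at hv₁
  rw [hv₁] at hv
  have hx : v ∘ Sum.inl ∘ Sum.inl = 0 := mulVec_injective_iff.mpr h₁ (by rw [hv₁, mulVec_zero])
  have hy : -(v ∘ Sum.inl ∘ Sum.inr) = 0 :=
    mulVec_injective_iff.mpr h₂ (by rw [hv.1, mulVec_zero])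
  have hz : -(v ∘ Sum.inr) = 0 := mulVec_injective_iff.mpr h₃ (by rw [hv.2, mulVec_zero])
  rw [neg_eq_zero] at hy hz
  ext ((i | i) | i)
  · exact congrFun hx i
  · exact congrFun hy i
  · exact congrFun hz i

variable [Fintype m]

lemma map_ker_fromBlocks_fromCols_kerToIntersection :
    (LinearMap.ker (fromBlocks (fromCols A₁ A₂) 0 (fromCols A₁ 0) A₃).mulVecLin).map
        (kerToIntersection A₁) = colSpan A₁ ⊓ colSpan A₂ ⊓ colSpan A₃ := by
  ext w
  simp only [Submodule.mem_map, LinearMap.mem_ker, mulVecLin_apply, Submodule.mem_inf,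
    mem_colSpan_iff, fromBlocks_fromCols_mulVec_eq_zero_iff, kerToIntersection_apply]
  constructor
  · rintro ⟨v, ⟨h₂, h₃⟩, rfl⟩
    exact ⟨⟨⟨_, rfl⟩, ⟨_, h₂⟩⟩, ⟨_, h₃⟩⟩
  · rintro ⟨⟨⟨c₁, rfl⟩, ⟨c₂, h₂⟩⟩, ⟨c₃, h₃⟩⟩
    refine ⟨Sum.elim (Sum.elim c₁ (-c₂)) (-c₃), ?_, rfl⟩
    simp only [← Function.comp_assoc, Sum.elim_comp_inl, Sum.elim_comp_inr, neg_neg]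
    exact ⟨h₂, h₃⟩

variable {A₁ A₂ A₃} in
theorem finrank_inf_colSpan_add_rank_fromBlocks_fromCols (h₁ : LinearIndependent F A₁ᵀ)
    (h₂ : LinearIndependent F A₂ᵀ) (h₃ : LinearIndependent F A₃ᵀ) :
    Module.finrank F (colSpan A₁ ⊓ colSpan A₂ ⊓ colSpan A₃ : Submodule F (m → F)) +
        (fromBlocks (fromCols A₁ A₂) 0 (fromCols A₁ 0) A₃).rank =
      Fintype.card n₁ + Fintype.card n₂ + Fintype.card n₃ := by
  have hinj := LinearMap.disjoint_ker_iff_injOn.mp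
    (disjoint_ker_fromBlocks_fromCols_ker_kerToIntersection h₁ h₂ h₃)
  rw [← map_ker_fromBlocks_fromCols_kerToIntersection, Submodule.finrank_map_of_injOn hinj,
    add_comm, rank, LinearMap.finrank_range_add_finrank_ker, Module.finrank_fintype_fun_eq_card,
    Fintype.card_sum, Fintype.card_sum]

end

/-- Three-subspace intersection dimension formula: if `A_i ∈ F^{d×μ_i}` has linearly
independent columns spanning `U_i`, then
`dim(U1 ∩ U2 ∩ U3) = μ1 + μ2 + μ3 − rank([[A1, A2, 0], [A1, 0, A3]])`. -/
theorem stmt19 {F : Type*} [Field F] {d μ1 μ2 μ3 : ℕ}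
    (A1 : Matrix (Fin d) (Fin μ1) F) (A2 : Matrix (Fin d) (Fin μ2) F)
    (A3 : Matrix (Fin d) (Fin μ3) F)
    (h1 : LinearIndependent F A1.transpose) (h2 : LinearIndependent F A2.transpose)
    (h3 : LinearIndependent F A3.transpose) :
    Module.finrank F (colSpan A1 ⊓ colSpan A2 ⊓ colSpan A3 : Submodule F (Fin d → F)) =
      μ1 + μ2 + μ3 -
        (Matrix.fromBlocks (Matrix.fromCols A1 A2) 0
          (Matrix.fromCols A1 0) A3).rank := by
  have h := finrank_inf_colSpan_add_rank_fromBlocks_fromCols h1 h2 h3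
  simp only [Fintype.card_fin] at h
  omega
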